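/- arXiv:2003.02753 — 4 statements merged into one kernel-verified Lean document; each statement's English description precedes it below -/
import Mathlib

section
/- Let S = {s_1,…,s_n} be a totally ordered alphabet, let 1 ≤ i < j ≤ n, let u, v be words over S, and let b_{i,j} = s_i s_j s_i ⋯ be the alternating word of odd length m starting with s_i. Let κ be the number of occurrences in u of letters s_k with i < k ≤ j, and μ the number of occurrences in v of letters s_k with i ≤ k < j. Then σ(u b_{i,j} v) = (−1)^{κ+μ} σ(u b_{j,i} v). -/
/-- The number of inversions of a word `w`: pairs of positions `(p,q)` with `p < q` such that
the letter at position `q` is strictly smaller than the letter at position `p`. -/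
def invCount {S : Type*} [LinearOrder S] (w : List S) : ℕ :=
  (Finset.univ.filter
    (fun p : Fin w.length × Fin w.length => p.1 < p.2 ∧ w.get p.2 < w.get p.1)).card

/-- The `S`-sign of a word. -/
def ssign {S : Type*} [LinearOrder S] (w : List S) : ℤ := (-1) ^ invCount w

/-- The alternating word of length `m` starting with `a` (then `b`, `a`, `b`, …). -/
def altWord {S : Type*} (a b : S) : ℕ → List S
  | 0 => []
  | m + 1 => a :: altWord b a m


/-!
Cut `u w v` into its three blocks: `inv (u w v)` is the sum of the inversions inside each block
and of the cross inversions between blocks, which only depend on the multisets of letters.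
For `m = 2k + 1`, `b_{a,b}` and `b_{b,a}` have the same number of inversions, and as multisets
they differ by one `a` replaced by one `b`. Hence passing from `b_{b,a}` to `b_{a,b}` adds `κ`
cross inversions with `u` and removes `μ` cross inversions with `v`.
-/

theorem List.card_filter_get_eq_countP {α : Type*} (l : List α) (p : α → Prop)
    [DecidablePred p] :
    (Finset.univ.filter fun i : Fin l.length => p (l.get i)).card = l.countP (p ·) := by
  conv_rhs => rw [← Multiset.coe_countP, ← List.ofFn_get l, ← Fin.univ_val_map]
  rw [Multiset.countP_map]
  rfl

section altWord

variable {S : Type*}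

theorem altWord_succ (a b : S) (m : ℕ) : altWord a b (m + 1) = a :: altWord b a m :=
  rfl

theorem altWord_add_two (a b : S) (m : ℕ) : altWord a b (m + 2) = a :: b :: altWord a b m :=
  rfl

theorem altWord_two_mul_perm (a b : S) (k : ℕ) :
    (altWord a b (2 * k)).Perm (altWord b a (2 * k)) := by
  induction k with
  | zero => rfl
  | succ k ih =>
    rw [Nat.mul_succ, altWord_add_two, altWord_add_two]
    exact ((ih.cons b).cons a).trans (.swap b a _)

theorem altWord_two_mul_add_one (a b : S) (k : ℕ) :
    altWord a b (2 * k + 1) = altWord a b (2 * k) ++ [a] := by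
  induction k with
  | zero => rfl
  | succ k ih => rw [Nat.mul_succ, add_right_comm, altWord_add_two, altWord_add_two, ih]; rfl

theorem countP_altWord_two_mul (p : S → Bool) (a b : S) (k : ℕ) :
    (altWord a b (2 * k)).countP p = k * [a, b].countP p := by
  induction k with
  | zero => simp [altWord]
  | succ k ih =>
    simp only [Nat.mul_succ, altWord_add_two, List.countP_cons, ih, List.countP_nil]
    ring

end altWord

section inversions

variable {S : Type*} [LinearOrder S]

def crossInv (x y : List S) : ℕ :=
  (x.map fun c => y.countP (· < c)).sum

theorem invCount_cons (c : S) (w : List S) :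
    invCount (c :: w) = w.countP (· < c) + invCount w := by
  rw [invCount, invCount, Finset.card_filter, Finset.card_filter, Fintype.sum_prod_type,
    Fintype.sum_prod_type]
  simp only [List.length_cons, Fin.sum_univ_succ, List.get_cons_succ', List.get_cons_zero,
    Fin.succ_lt_succ_iff, false_and, if_false, Fin.succ_pos, true_and, zero_add, Fin.not_lt_zero]
  rw [← Finset.card_filter, w.card_filter_get_eq_countP (· < c)]

theorem invCount_append_singleton (w : List S) (c : S) :
    invCount (w ++ [c]) = invCount w + w.countP (c < ·) := by
  induction w with
  | nil => rfl
  | cons d w ih =>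
    simp only [List.cons_append, invCount_cons, ih, List.countP_append, List.countP_cons,
      List.countP_nil]
    omega

theorem crossInv_cons_left (c : S) (x y : List S) :
    crossInv (c :: x) y = y.countP (· < c) + crossInv x y :=
  List.sum_cons

theorem crossInv_cons_right (x : List S) (d : S) (y : List S) :
    crossInv x (d :: y) = x.countP (d < ·) + crossInv x y := by
  induction x with
  | nil => rfl
  | cons c x ih =>
    simp only [crossInv_cons_left, ih, List.countP_cons]
    omega

theorem crossInv_append_left (x y z : List S) :
    crossInv (x ++ y) z = crossInv x z + crossInv y z := by
  simp [crossInv]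

theorem List.Perm.crossInv_left {x x' : List S} (h : x.Perm x') (y : List S) :
    crossInv x y = crossInv x' y :=
  (h.map _).sum_eq

theorem List.Perm.crossInv_right (x : List S) {y y' : List S} (h : y.Perm y') :
    crossInv x y = crossInv x y' := by
  simp only [crossInv, h.countP_eq]

theorem invCount_append (x y : List S) :
    invCount (x ++ y) = invCount x + invCount y + crossInv x y := by
  induction x with
  | nil => simp [crossInv]; rfl
  | cons c x ih =>
    simp only [List.cons_append, invCount_cons, ih, List.countP_append, crossInv_cons_left]
    omega

theorem invCount_append_append (x y z : List S) :
    invCount (x ++ y ++ z) = invCount x + invCount y + invCount z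
      + crossInv x y + crossInv x z + crossInv y z := by
  rw [invCount_append, invCount_append, crossInv_append_left]
  omega

theorem countP_gt_eq_countP_Ioc_add {a b : S} (hab : a < b) (l : List S) :
    l.countP (a < ·) = l.countP (fun c => a < c ∧ c ≤ b) + l.countP (b < ·) := by
  induction l with
  | nil => rfl
  | cons c l ih =>
    simp only [List.countP_cons, ih]
    grind

theorem countP_lt_eq_countP_Ico_add {a b : S} (hab : a < b) (l : List S) :
    l.countP (· < b) = l.countP (fun c => a ≤ c ∧ c < b) + l.countP (· < a) := by
  induction l with
  | nil => rfl
  | cons c l ih =>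
    simp only [List.countP_cons, ih]
    grind

/-- The words are `(ab)ᵏa` and `b(ab)ᵏ`: the last `a`, resp. the first `b`, is inverted with
exactly the `k` letters `b`, resp. `a`, of `(ab)ᵏ`. -/
theorem invCount_altWord_odd_swap {a b : S} (hab : a < b) (k : ℕ) :
    invCount (altWord a b (2 * k + 1)) = invCount (altWord b a (2 * k + 1)) := by
  rw [altWord_two_mul_add_one, altWord_succ, invCount_append_singleton, invCount_cons,
    countP_altWord_two_mul, countP_altWord_two_mul]
  simp [hab, add_comm]

theorem crossInv_altWord_odd_swap_right {a b : S} (hab : a < b) (u : List S) (k : ℕ) :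
    crossInv u (altWord a b (2 * k + 1)) =
      u.countP (fun c => a < c ∧ c ≤ b) + crossInv u (altWord b a (2 * k + 1)) := by
  rw [altWord_succ, altWord_succ, crossInv_cons_right, crossInv_cons_right, countP_gt_eq_countP_Ioc_add hab,
    (altWord_two_mul_perm a b k).crossInv_right u]
  omega

theorem crossInv_altWord_odd_swap_left {a b : S} (hab : a < b) (v : List S) (k : ℕ) :
    crossInv (altWord a b (2 * k + 1)) v + v.countP (fun c => a ≤ c ∧ c < b) =
      crossInv (altWord b a (2 * k + 1)) v := by
  rw [altWord_succ, altWord_succ, crossInv_cons_left, crossInv_cons_left, countP_lt_eq_countP_Ico_add hab,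
    (altWord_two_mul_perm a b k).crossInv_left v]
  omega

end inversions

/-- Odd braid moves: `σ(u b_{i,j} v) = (-1)^{κ+μ} σ(u b_{j,i} v)` when `m` is odd, where `κ` is
the number of letters `c` of `u` with `a < c ≤ b` and `μ` is the number of letters `c` of `v`
with `a ≤ c < b`. -/
theorem ssign_braid_move_odd {S : Type*} [LinearOrder S] {a b : S} (hab : a < b)
    (m : ℕ) (hm : Odd m) (u v : List S) :
    ssign (u ++ altWord a b m ++ v) =
      (-1) ^ (u.countP (fun c => decide (a < c ∧ c ≤ b)) +
              v.countP (fun c => decide (a ≤ c ∧ c < b))) *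
        ssign (u ++ altWord b a m ++ v) := by
  obtain ⟨k, rfl⟩ := hm
  have key : invCount (u ++ altWord a b (2 * k + 1) ++ v) +
        v.countP (fun c => a ≤ c ∧ c < b) =
      invCount (u ++ altWord b a (2 * k + 1) ++ v) + u.countP (fun c => a < c ∧ c ≤ b) := by
    rw [invCount_append_append, invCount_append_append, invCount_altWord_odd_swap hab,
      crossInv_altWord_odd_swap_right hab, ← crossInv_altWord_odd_swap_left hab v k]
    omega
  rw [ssign, ssign, ← pow_add, neg_one_pow_eq_pow_mod_two,
    neg_one_pow_eq_pow_mod_two (_ + _)]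
  congr 1
  omega
end

section
/- For a partition λ = (λ_1 ≥ ⋯ ≥ λ_d ≥ 0), the determinant of the d×d matrix with (i,j)-entry x_j^{i−1+λ_{d−i+1}} is divisible, in ℤ[x_1,…,x_d], by the Vandermonde determinant ∏_{1≤i<j≤d}(x_j − x_i), and the quotient (the Schur polynomial s_λ) is a symmetric polynomial in x_1,…,x_d. -/
open Finset MvPolynomial

/-!
Substituting `x_j` for `x_i` makes two columns of the bialternant equal, so `x_i - x_j` divides
it. These linear forms are pairwise non-associated primes, so their product, the Vandermonde
determinant, divides it as well. A permutation `σ` of the variables multiplies both determinants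
by `sign σ`, hence fixes their quotient.
-/

theorem Finset.prod_dvd_of_prime_of_pairwise_not_dvd {ι M₀ : Type*} [CommMonoidWithZero M₀]
    [IsCancelMulZero M₀] {s : Finset ι} {f : ι → M₀} {n : M₀} (hp : ∀ a ∈ s, Prime (f a))
    (hnd : (s : Set ι).Pairwise fun a b => ¬ f a ∣ f b) (hd : ∀ a ∈ s, f a ∣ n) :
    ∏ a ∈ s, f a ∣ n := by
  induction s using Finset.cons_induction generalizing n with
  | empty => simp
  | cons a s ha ih =>
    simp only [Finset.forall_mem_cons, Finset.coe_cons, Set.pairwise_insert] at hp hnd hd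
    obtain ⟨m, rfl⟩ := hd.1
    rw [Finset.prod_cons]
    refine mul_dvd_mul_left _ (ih hp.2 hnd.1 fun b hb => ?_)
    have hab : a ≠ b := fun h => ha (h ▸ hb)
    exact ((hp.2 b hb).dvd_or_dvd (hd.2 b hb)).resolve_left (hnd.2 b hb hab).2

namespace MvPolynomial

variable {R σ : Type*} [CommRing R]

theorem X_sub_X_dvd_of_rename_update_eq_zero [DecidableEq σ] {i j : σ} {P : MvPolynomial σ R}
    (hP : rename (Function.update id i j) P = 0) : X i - X j ∣ P := by
  set I := Ideal.span {(X i - X j : MvPolynomial σ R)}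
  have hmod : (Ideal.Quotient.mkₐ R I).comp (rename (Function.update id i j)) =
      Ideal.Quotient.mkₐ R I := by
    refine algHom_ext fun k => ?_
    rcases eq_or_ne k i with rfl | hk
    · simp [Ideal.Quotient.mkₐ_eq_mk, Ideal.Quotient.eq, I, Ideal.mem_span_singleton]
      exact dvd_sub_comm.mp dvd_rfl
    · simp [hk]
  rw [← Ideal.mem_span_singleton, ← Ideal.Quotient.eq_zero_iff_mem, ← Ideal.Quotient.mkₐ_eq_mk R,
    ← hmod, AlgHom.comp_apply, hP, map_zero]

theorem prime_X_sub_X [IsDomain R] [DecidableEq σ] {i j : σ} (h : i ≠ j) :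
    Prime (X i - X j : MvPolynomial σ R) := by
  let shear : MvPolynomial σ R ≃ₐ[R] MvPolynomial σ R :=
    AlgEquiv.ofAlgHom (aeval (Function.update X i (X i - X j)))
      (aeval (Function.update X i (X i + X j)))
      (algHom_ext fun k => by rcases eq_or_ne k i with rfl | hk <;> simp [*, h.symm])
      (algHom_ext fun k => by rcases eq_or_ne k i with rfl | hk <;> simp [*, h.symm])
  have hX : shear (X i) = X i - X j := by simp [shear]
  rw [← hX]
  exact (MulEquiv.prime_iff shear.toMulEquiv).mpr X_prime

theorem not_X_sub_X_dvd [Nontrivial R] [DecidableEq σ] {i j k l : σ} (hij : i ≠ j) (hk : i ≠ k)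
    (hl : i ≠ l) :
    ¬ (X k - X l : MvPolynomial σ R) ∣ X i - X j := by
  intro hdvd
  have := map_dvd (eval (Pi.single i 1)) hdvd
  simp [hij.symm, hk.symm, hl.symm] at this

section Alternant

variable (R) {n : Type*} [Fintype n] [DecidableEq n]

noncomputable def alternant (e : n → ℕ) : MvPolynomial n R :=
  (Matrix.of fun i j => (X j : MvPolynomial n R) ^ e i).det

variable {R}

theorem rename_alternant (e : n → ℕ) (τ : Equiv.Perm n) :
    rename τ (alternant R e) = Equiv.Perm.sign τ * alternant R e := by
  rw [alternant, AlgHom.map_det, ← Matrix.det_permute']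
  congr 1
  ext i j
  simp

theorem rename_update_alternant (e : n → ℕ) {a b : n} (hab : a ≠ b) :
    rename (Function.update id a b) (alternant R e) = 0 := by
  rw [alternant, AlgHom.map_det]
  exact Matrix.det_zero_of_column_eq hab fun k => by simp [Function.update_of_ne hab.symm]

theorem alternant_val_eq_prod (d : ℕ) :
    alternant R (fun i : Fin d => (i : ℕ)) = ∏ i : Fin d, ∏ j ∈ Ioi i, (X j - X i) := by
  rw [← Matrix.det_vandermonde, ← Matrix.det_transpose]
  rfl

theorem prod_X_sub_X_dvd_alternant [IsDomain R] {d : ℕ} (e : Fin d → ℕ) :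
    ∏ i : Fin d, ∏ j ∈ Ioi i, (X j - X i : MvPolynomial (Fin d) R) ∣ alternant R e := by
  rw [Finset.prod_sigma']
  refine Finset.prod_dvd_of_prime_of_pairwise_not_dvd (fun p hp => ?_) ?_ fun p hp => ?_
  · exact prime_X_sub_X (mem_Ioi.mp (mem_sigma.mp hp).2).ne'
  · rintro ⟨a, b⟩ hp ⟨a', b'⟩ hq hpq
    simp only [coe_sigma, coe_univ, coe_Ioi, Set.mem_sigma_iff, Set.mem_univ, Set.mem_Ioi,
      true_and] at hp hq
    by_cases hb' : b' = a ∨ b' = b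
    · by_cases ha' : a' = a ∨ a' = b
      · exfalso
        obtain rfl | rfl := hb' <;> obtain rfl | rfl := ha'
        all_goals first | exact hpq rfl | order
      · push Not at ha'
        rw [dvd_sub_comm]
        exact not_X_sub_X_dvd hq.ne ha'.2 ha'.1
    · push Not at hb'
      exact not_X_sub_X_dvd hq.ne' hb'.2 hb'.1
  · exact X_sub_X_dvd_of_rename_update_eq_zero
      (rename_update_alternant e (mem_Ioi.mp (mem_sigma.mp hp).2).ne')

theorem isSymmetric_of_alternant_eq_mul [IsDomain R] {e f : n → ℕ} {s : MvPolynomial n R}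
    (hf : alternant R f ≠ 0) (h : alternant R e = alternant R f * s) : s.IsSymmetric := by
  intro τ
  have hsign : ((Equiv.Perm.sign τ : ℤ) : MvPolynomial n R) ≠ 0 :=
    ((Equiv.Perm.sign τ).isUnit.map (Int.castRingHom _)).ne_zero
  refine mul_left_cancel₀ (mul_ne_zero hsign hf) ?_
  calc _ = rename τ (alternant R f * s) := by rw [map_mul, rename_alternant]
    _ = _ := by rw [← h, rename_alternant, h, mul_assoc]

end Alternant

end MvPolynomial

theorem schur_bialternant_general (d : ℕ) (lam : Fin d → ℕ) :
    ∃ s : MvPolynomial (Fin d) ℤ,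
      (Matrix.of fun i j : Fin d =>
          (X j : MvPolynomial (Fin d) ℤ) ^ ((i : ℕ) + lam i.rev)).det =
        (∏ i : Fin d, ∏ j ∈ Ioi i, (X j - X i : MvPolynomial (Fin d) ℤ)) * s ∧
      ∀ σ : Equiv.Perm (Fin d), rename σ s = s := by
  obtain ⟨s, hs⟩ := prod_X_sub_X_dvd_alternant (R := ℤ) fun i : Fin d => (i : ℕ) + lam i.rev
  refine ⟨s, hs, isSymmetric_of_alternant_eq_mul (f := fun i : Fin d => (i : ℕ)) ?_ (hs.trans ?_)⟩
  all_goals rw [alternant_val_eq_prod]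
  exact prod_ne_zero_iff.mpr fun i _ => prod_ne_zero_iff.mpr fun j hj =>
    sub_ne_zero.mpr (X_injective.ne (mem_Ioi.mp hj).ne')

/-- For a partition `λ = (λ_1 ≥ … ≥ λ_d ≥ 0)` (here `lam i.rev` is `λ_{d-i+1}` for a zero-based
row index `i`), the bialternant determinant `det (x_j^{i-1+λ_{d-i+1}})` is divisible by the
Vandermonde determinant `∏_{i<j} (x_j - x_i)` in `ℤ[x_1,…,x_d]`, and the quotient (the Schur
polynomial) is symmetric. -/
theorem schur_bialternant (d : ℕ) (lam : Fin d → ℕ) (hlam : Antitone lam) :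
    ∃ s : MvPolynomial (Fin d) ℤ,
      (Matrix.of fun i j : Fin d =>
          (X j : MvPolynomial (Fin d) ℤ) ^ ((i : ℕ) + lam i.rev)).det =
        (∏ i : Fin d, ∏ j ∈ Ioi i, (X j - X i : MvPolynomial (Fin d) ℤ)) * s ∧
      ∀ σ : Equiv.Perm (Fin d), rename σ s = s :=
  schur_bialternant_general d lam
end

section
/- Dual Cauchy identity: for positive integers a and b and variables x_1,…,x_a, y_1,…,y_b, ∏_{i=1}^{a} ∏_{j=1}^{b} (1 + x_i y_j) = Σ_λ s_λ(x_1,…,x_a) · s_{λ'}(y_1,…,y_b), where the sum is over all partitions λ with at most a parts, each of size at most b, and λ' denotes the conjugate partition. -/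
/-!
The left side is the determinant of the `(a + b) × (a + b)` projective Vandermonde matrix with
rows `(x_i ^ k)_k` and `((-y_j) ^ (a + b - 1 - k))_k`, whose pair factors are `x_{i'} - x_i`,
`1 + x_i y_j` and `y_{j'} - y_j`. Expand it along the `x`-rows. An `a`-element set of columns is
the same as a partition `λ` in the `a × b` box, the columns being `λ_{a-1-i} + i`, and by the
complementation lemma (Macdonald I.1.7) the other columns are `a + b - 1 - (λ'_{b-1-j} + j)`.
The two minors are `altDet λ x` and `altDet λ' (-y)`, and the sign of the column shuffle is
exactly the sign `(-1) ^ ∑_j (λ'_{b-1-j} + j)` by which `altDet λ' (-y)` differs from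
`altDet λ' y`.
-/

open Finset MvPolynomial

/-- The Vandermonde product `∏_{i<j} (z_j - z_i)`. -/
def vandProd {R : Type*} [CommRing R] {d : ℕ} (z : Fin d → R) : R :=
  ∏ i : Fin d, ∏ j ∈ Ioi i, (z j - z i)

/-- The bialternant numerator `det (z_j^{i-1+λ_{d-i+1}})` of the Schur polynomial `s_λ`,
so that `s_λ(z) = altDet lam z / vandProd z`. -/
def altDet {R : Type*} [CommRing R] {d : ℕ} (lam : Fin d → ℕ) (z : Fin d → R) : R :=
  (Matrix.of fun i j : Fin d => z j ^ ((i : ℕ) + lam i.rev)).det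

/-- The conjugate partition: `λ'_j` (zero-based `j`) is the number of parts of `λ` exceeding
`j`. -/
def conjPart {a : ℕ} (b : ℕ) (lam : Fin a → ℕ) : Fin b → ℕ :=
  fun j => (Finset.univ.filter (fun i : Fin a => (j : ℕ) < lam i)).card

open Equiv Function

theorem Fin.prod_prod_Ioi_add {M : Type*} [CommMonoid M] {a b : ℕ}
    (f : Fin (a + b) → Fin (a + b) → M) :
    ∏ p, ∏ q ∈ Ioi p, f p q =
      (∏ i, ∏ i' ∈ Ioi i, f (castAdd b i) (castAdd b i')) *
        (∏ i, ∏ j, f (castAdd b i) (natAdd a j)) *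
        ∏ j, ∏ j' ∈ Ioi j, f (natAdd a j) (natAdd a j') := by
  have h₁ (i : Fin a) (j : Fin b) : castAdd b i < natAdd a j := by
    simp only [Fin.lt_def, Fin.val_castAdd, Fin.val_natAdd]; omega
  have h₂ (i i' : Fin a) : castAdd b i < castAdd b i' ↔ i < i' := by
    simp only [Fin.lt_def, Fin.val_castAdd]
  simp only [← filter_lt_eq_Ioi, prod_filter, Fin.prod_univ_add, prod_mul_distrib, h₁,
    (h₁ _ _).not_gt, h₂, Fin.natAdd_lt_natAdd_iff, if_true, if_false, prod_const_one, mul_one,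
    mul_assoc]

theorem Fin.val_sub_le_of_strictMono {k n : ℕ} {m : Fin k → Fin n} (hm : StrictMono m)
    {i j : Fin k} (hij : i ≤ j) : (j : ℕ) - i ≤ m j - m i := by
  have := card_le_card_of_injOn m (fun l hl => by
      simp only [coe_Icc, Set.mem_Icc] at hl ⊢; exact ⟨hm.monotone hl.1, hm.monotone hl.2⟩)
    hm.injective.injOn (s := Icc i j) (t := Icc (m i) (m j))
  simp only [Fin.card_Icc] at this
  omega

theorem Fin.le_val_of_strictMono {k n : ℕ} {m : Fin k → Fin n} (hm : StrictMono m)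
    (i : Fin k) : (i : ℕ) ≤ m i := by
  have := Fin.val_sub_le_of_strictMono hm (i := ⟨0, Nat.zero_lt_of_lt i.2⟩) (j := i)
    (Nat.zero_le _)
  simp only at this
  omega

theorem Fin.val_le_add_of_strictMono {k n : ℕ} {m : Fin k → Fin n} (hm : StrictMono m)
    (i : Fin k) : (m i : ℕ) ≤ i + (n - k) := by
  have h := Fin.val_sub_le_of_strictMono hm (i := i) (j := ⟨k - 1, Nat.sub_one_lt_of_lt i.2⟩)
    (Nat.le_sub_one_of_lt i.2)
  have := (m ⟨k - 1, Nat.sub_one_lt_of_lt i.2⟩).2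
  simp only at h
  omega

theorem Fin.monotone_val_sub_of_strictMono {k n : ℕ} {m : Fin k → Fin n} (hm : StrictMono m) :
    Monotone fun i => (m i : ℕ) - i := fun i j hij => by
  have := Fin.val_sub_le_of_strictMono hm hij
  have : m i ≤ m j := hm.monotone hij
  have : (i : ℕ) ≤ m i := Fin.le_val_of_strictMono hm i
  dsimp only
  omega

theorem Equiv.Perm.bijective_sumCongr_trans {α β K : Type*} [Finite α] [Finite β]
    (e : K → Perm (α ⊕ β))
    (he : ∀ σ : Perm (α ⊕ β),
      ∃! k, Set.MapsTo (σ.trans (e k).symm) (Set.range Sum.inl) (Set.range Sum.inl)) :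
    Bijective fun t : K × Perm α × Perm β => (sumCongr t.2.1 t.2.2).trans (e t.1) := by
  have hmaps (k : K) (π : Perm α) (τ : Perm β) : Set.MapsTo
      (((sumCongr π τ).trans (e k)).trans (e k).symm) (Set.range Sum.inl) (Set.range Sum.inl) := by
    rintro _ ⟨i, rfl⟩
    exact ⟨π i, by simp⟩
  refine ⟨?_, fun σ => ?_⟩
  · rintro ⟨k, π, τ⟩ ⟨k', π', τ'⟩ h
    dsimp only at h
    obtain rfl : k = k' := (he _).unique (hmaps k π τ) (by rw [h]; exact hmaps k' π' τ')
    have h' : sumCongrHom α β (π, τ) = sumCongrHom α β (π', τ') := by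
      simpa [Equiv.trans_assoc] using congrArg (·.trans (e k).symm) h
    obtain ⟨rfl, rfl⟩ := Prod.ext_iff.1 (sumCongrHom_injective h')
    rfl
  · obtain ⟨k, hk, -⟩ := he σ
    obtain ⟨⟨π, τ⟩, h⟩ := mem_sumCongrHom_range_of_perm_mapsTo_inl hk
    refine ⟨(k, π, τ), ?_⟩
    simp only [Perm.sumCongrHom_apply] at h
    simp [h, Equiv.trans_assoc]

/-- Laplace expansion along the columns `Sum.inl`: `e k` sends them to the `k`-th choice of
rows, and bijectivity says that every choice occurs exactly once. -/
theorem Matrix.det_eq_sum_sign_smul_det_mul_det {α β K R : Type*} [Fintype α] [DecidableEq α]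
    [Fintype β] [DecidableEq β] [Fintype K] [CommRing R] (M : Matrix (α ⊕ β) (α ⊕ β) R)
    (e : K → Perm (α ⊕ β))
    (he : Bijective fun t : K × Perm α × Perm β => (sumCongr t.2.1 t.2.2).trans (e t.1)) :
    M.det = ∑ k, Perm.sign (e k) •
      ((Matrix.of fun i i' => M (e k (Sum.inl i)) (Sum.inl i')).det *
        (Matrix.of fun j j' => M (e k (Sum.inr j)) (Sum.inr j')).det) := by
  rw [Matrix.det_apply, ← Fintype.sum_bijective _ he _ _ fun _ => rfl, Fintype.sum_prod_type]
  refine sum_congr rfl fun k _ => ?_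
  rw [Fintype.sum_prod_type, Matrix.det_apply, Matrix.det_apply, sum_mul_sum, smul_sum]
  refine sum_congr rfl fun π _ => ?_
  rw [smul_sum]
  refine sum_congr rfl fun τ _ => ?_
  simp [Perm.sign_trans, Fintype.prod_sum_type, smul_mul_smul_comm, mul_smul]

theorem det_projVandermonde_append {R : Type*} [CommRing R] {a b : ℕ} (x : Fin a → R)
    (y : Fin b → R) :
    (Matrix.projVandermonde (Fin.append x 1) (Fin.append 1 (-y))).det =
      vandProd x * (∏ i, ∏ j, (1 + x i * y j)) * vandProd y := by
  rw [Matrix.det_projVandermonde, Fin.prod_prod_Ioi_add]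
  simp only [Fin.append_left, Fin.append_right, Pi.one_apply, Pi.neg_apply, mul_one, one_mul,
    mul_neg, sub_neg_eq_add, neg_add_eq_sub, vandProd]

def shift {d : ℕ} (lam : Fin d → ℕ) (i : Fin d) : ℕ := i + lam i.rev

section Shift

variable {d : ℕ} {lam : Fin d → ℕ}

theorem shift_strictMono (hlam : Antitone lam) : StrictMono (shift lam) := fun i i' h => by
  have := hlam (Fin.rev_le_rev.mpr h.le)
  have : (i : ℕ) < i' := h
  simp only [shift]
  omega

theorem shift_lt_add {b : ℕ} (hb : ∀ i, lam i ≤ b) (i : Fin d) : shift lam i < d + b := by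
  have := hb i.rev
  have := i.2
  simp only [shift]
  omega

theorem altDet_const_mul {R : Type*} [CommRing R] (c : R) (z : Fin d → R) :
    altDet lam (fun j => c * z j) = c ^ (∑ i, shift lam i) * altDet lam z := by
  rw [altDet, altDet, ← prod_pow_eq_pow_sum, ← Matrix.det_mul_column]
  simp only [mul_pow]
  rfl

end Shift

section Conjugate

variable {a b : ℕ} {lam : Fin a → ℕ}

theorem lt_conjPart_iff (hlam : Antitone lam) (i : Fin a) (j : Fin b) :
    (i : ℕ) < conjPart b lam j ↔ (j : ℕ) < lam i := by
  constructor
  · intro h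
    by_contra! hle
    have hsub : univ.filter (fun i' => (j : ℕ) < lam i') ⊆ Iio i := fun i' hi' =>
      mem_Iio.mpr (lt_of_not_ge fun hii => ((hlam hii).trans hle).not_gt (mem_filter.mp hi').2)
    exact (h.trans_le ((card_le_card hsub).trans_eq (Fin.card_Iio i))).false
  · intro h
    have hsub : Iic i ⊆ univ.filter (fun i' => (j : ℕ) < lam i') := fun i' hi' =>
      mem_filter.mpr ⟨mem_univ _, h.trans_le (hlam (mem_Iic.mp hi'))⟩
    exact (Fin.card_Iic i).symm.trans_le (card_le_card hsub)

theorem conjPart_le (lam : Fin a → ℕ) (j : Fin b) : conjPart b lam j ≤ a :=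
  (card_filter_le _ _).trans_eq (card_fin a)

theorem conjPart_antitone (lam : Fin a → ℕ) : Antitone (conjPart b lam) := fun _ _ h =>
  card_le_card (monotone_filter_right _ fun _ _ hi => lt_of_le_of_lt h hi)

theorem add_le_shift_add_shift_conjPart_iff (hlam : Antitone lam) (i : Fin a) (j : Fin b) :
    a + b ≤ shift lam i + shift (conjPart b lam) j ↔ (i.rev : ℕ) < conjPart b lam j.rev := by
  have := Fin.val_rev i
  have := Fin.val_rev j
  have := lt_conjPart_iff hlam i.rev j.rev
  simp only [shift]
  omega

theorem shift_add_shift_conjPart_ne (hlam : Antitone lam) (i : Fin a) (j : Fin b) :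
    shift lam i + shift (conjPart b lam) j + 1 ≠ a + b := by
  have := Fin.val_rev i
  have := Fin.val_rev j
  have := lt_conjPart_iff hlam i.rev j.rev
  simp only [shift]
  omega

end Conjugate

abbrev BoxPartition (a b : ℕ) :=
  {lam : Fin a → Fin (b + 1) // ∀ i j : Fin a, i ≤ j → (lam j : ℕ) ≤ (lam i : ℕ)}

namespace BoxPartition

variable {a b : ℕ} (lam : BoxPartition a b)

def parts : Fin a → ℕ := fun i => lam.1 i

theorem antitone_parts : Antitone lam.parts := lam.2

theorem parts_le (i : Fin a) : lam.parts i ≤ b := Nat.lt_succ_iff.mp (lam.1 i).2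

def xCol (i : Fin a) : Fin (a + b) := ⟨shift lam.parts i, shift_lt_add lam.parts_le i⟩

def yCol (j : Fin b) : Fin (a + b) :=
  Fin.rev ⟨shift (conjPart b lam.parts) j,
    by simpa [add_comm a b] using shift_lt_add (conjPart_le lam.parts) j⟩

theorem xCol_strictMono : StrictMono lam.xCol := shift_strictMono lam.antitone_parts

theorem yCol_strictAnti : StrictAnti lam.yCol := fun _ _ h =>
  Fin.rev_lt_rev.mpr (shift_strictMono (conjPart_antitone _) h)

theorem val_yCol_add (j : Fin b) :
    (lam.yCol j : ℕ) + shift (conjPart b lam.parts) j + 1 = a + b := by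
  have := shift_lt_add (conjPart_le lam.parts) j
  simp only [yCol, Fin.val_rev]
  omega

theorem xCol_lt_yCol_iff (i : Fin a) (j : Fin b) :
    lam.xCol i < lam.yCol j ↔ conjPart b lam.parts j.rev ≤ i.rev := by
  have := add_le_shift_add_shift_conjPart_iff lam.antitone_parts i j
  have := shift_add_shift_conjPart_ne lam.antitone_parts i j
  have := lam.val_yCol_add j
  simp only [Fin.lt_def, xCol]
  omega

theorem xCol_ne_yCol (i : Fin a) (j : Fin b) : lam.xCol i ≠ lam.yCol j := by
  have := shift_add_shift_conjPart_ne lam.antitone_parts i j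
  have := lam.val_yCol_add j
  simp only [ne_eq, Fin.ext_iff, xCol]
  omega

noncomputable def colEquiv : Fin a ⊕ Fin b ≃ Fin (a + b) :=
  Equiv.ofBijective (Sum.elim lam.xCol lam.yCol) <| by
    refine (Fintype.bijective_iff_injective_and_card _).mpr ⟨?_, by simp⟩
    rintro (i | j) (i' | j') h <;> simp only [Sum.elim_inl, Sum.elim_inr] at h
    · rw [lam.xCol_strictMono.injective h]
    · exact absurd h (lam.xCol_ne_yCol i j')
    · exact absurd h.symm (lam.xCol_ne_yCol i' j)
    · rw [lam.yCol_strictAnti.injective h]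

noncomputable def colPerm : Perm (Fin a ⊕ Fin b) := lam.colEquiv.trans finSumFinEquiv.symm

theorem sign_colPerm : Perm.sign lam.colPerm = (-1) ^ ∑ j, shift (conjPart b lam.parts) j := by
  set ρ : Perm (Fin (a + b)) := finSumFinEquiv.symm.trans lam.colEquiv
  have hρ : lam.colPerm = finSumFinEquiv.symm.permCongr ρ := by
    ext p; simp [colPerm, ρ, Equiv.permCongr_apply]
  have hx (i : Fin a) : ρ (Fin.castAdd b i) = lam.xCol i := by simp [ρ, colEquiv]
  have hy (j : Fin b) : ρ (Fin.natAdd a j) = lam.yCol j := by simp [ρ, colEquiv]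
  have hxx : ∏ i, ∏ i' ∈ Ioi i, (if lam.xCol i < lam.xCol i' then 1 else -1 : ℤˣ) = 1 :=
    prod_eq_one fun i _ => prod_eq_one fun i' hi' =>
      if_pos (lam.xCol_strictMono (mem_Ioi.mp hi'))
  have hxy : ∏ i, ∏ j, (if lam.xCol i < lam.yCol j then 1 else -1 : ℤˣ) =
      ∏ j : Fin b, (-1) ^ conjPart b lam.parts j.rev := by
    rw [prod_comm]
    refine prod_congr rfl fun j _ => ?_
    simp only [xCol_lt_yCol_iff]
    rw [← Equiv.prod_comp Fin.revPerm]
    simp only [Fin.revPerm_apply, Fin.rev_rev]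
    rw [prod_ite, prod_const_one, one_mul, prod_const]
    simp only [not_le, Fin.card_filter_val_lt]
    rw [min_eq_right (conjPart_le _ _)]
  have hyy : ∏ j, ∏ j' ∈ Ioi j, (if lam.yCol j < lam.yCol j' then 1 else -1 : ℤˣ) =
      ∏ j : Fin b, (-1) ^ (j.rev : ℕ) := by
    refine prod_congr rfl fun j _ => ?_
    rw [prod_congr rfl fun j' hj' => if_neg (lam.yCol_strictAnti (mem_Ioi.mp hj')).not_gt,
      prod_const, Fin.card_Ioi, Fin.val_rev]
    congr 1
    omega
  rw [hρ, Perm.sign_permCongr, Perm.sign_eq_prod_prod_Ioi, Fin.prod_prod_Ioi_add]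
  simp only [hx, hy]
  rw [hxx, hxy, hyy, one_mul, ← prod_pow_eq_pow_sum]
  simp only [shift, pow_add, prod_mul_distrib]
  rw [mul_comm]
  congr 1
  exact Equiv.prod_comp Fin.revPerm (fun j : Fin b => (-1 : ℤˣ) ^ (j : ℕ))

def ofStrictMono (m : Fin a → Fin (a + b)) (hm : StrictMono m) : BoxPartition a b :=
  ⟨fun k => ⟨m k.rev - k.rev, by have := Fin.val_le_add_of_strictMono hm k.rev; omega⟩,
    fun _ _ hij => Fin.monotone_val_sub_of_strictMono hm (Fin.rev_le_rev.mpr hij)⟩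

theorem xCol_ofStrictMono (m : Fin a → Fin (a + b)) (hm : StrictMono m) :
    (ofStrictMono m hm).xCol = m := by
  ext i
  have := Fin.le_val_of_strictMono hm i
  simp only [xCol, shift, parts, ofStrictMono, Fin.rev_rev]
  omega

theorem xCol_injective : Injective (xCol : BoxPartition a b → Fin a → Fin (a + b)) := by
  intro lam lam' h
  refine Subtype.ext (funext fun k => Fin.ext ?_)
  simpa [xCol, shift, parts] using congrArg Fin.val (congrFun h k.rev)

theorem existsUnique_range_subset_range_xCol (t : Fin a → Fin (a + b)) (ht : Injective t) :
    ∃! lam : BoxPartition a b, Set.range t ⊆ Set.range lam.xCol := by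
  classical
  set S := univ.image t
  have hS : #S = a := by simp [S, card_image_of_injective _ ht]
  have key (lam : BoxPartition a b) (h : Set.range t ⊆ Set.range lam.xCol) :
      lam.xCol = S.orderEmbOfFin hS := by
    have hsub : S ⊆ univ.image lam.xCol := by
      intro x hx
      obtain ⟨i, -, rfl⟩ := mem_image.mp hx
      obtain ⟨i', hi'⟩ := h ⟨i, rfl⟩
      exact mem_image.mpr ⟨i', mem_univ _, hi'⟩
    have hS' : S = univ.image lam.xCol := eq_of_subset_of_card_le hsub <| by
      rw [hS, card_image_of_injective _ lam.xCol_strictMono.injective, card_fin]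
    exact orderEmbOfFin_unique hS (fun i => hS' ▸ mem_image_of_mem _ (mem_univ i))
      lam.xCol_strictMono
  refine ⟨ofStrictMono _ (S.orderEmbOfFin hS).strictMono, ?_, fun lam h => ?_⟩
  · dsimp only
    rw [xCol_ofStrictMono, range_orderEmbOfFin]
    simp [S]
  · exact xCol_injective (by rw [key lam h, xCol_ofStrictMono])

theorem bijective_sumCongr_trans_colPerm :
    Bijective fun t : BoxPartition a b × Perm (Fin a) × Perm (Fin b) =>
      (sumCongr t.2.1 t.2.2).trans t.1.colPerm := by
  refine Perm.bijective_sumCongr_trans _ fun σ => ?_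
  have key (lam : BoxPartition a b) :
      Set.MapsTo (σ.trans lam.colPerm.symm) (Set.range Sum.inl) (Set.range Sum.inl) ↔
        Set.range (finSumFinEquiv ∘ σ ∘ Sum.inl) ⊆ Set.range lam.xCol := by
    simp only [Set.mapsTo_range_iff, Set.range_subset_iff, comp_apply, Set.mem_range, colPerm,
      Equiv.symm_trans_apply, Equiv.trans_apply, Equiv.symm_symm, Equiv.eq_symm_apply]
    rfl
  simpa only [key] using existsUnique_range_subset_range_xCol _
    (finSumFinEquiv.injective.comp (σ.injective.comp Sum.inl_injective))

end BoxPartition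

open BoxPartition in
theorem dual_cauchy_bialternant {R : Type*} [CommRing R] {a b : ℕ} (x : Fin a → R)
    (y : Fin b → R) :
    (∏ i, ∏ j, (1 + x i * y j)) * vandProd x * vandProd y =
      ∑ lam : BoxPartition a b, altDet lam.parts x * altDet (conjPart b lam.parts) y := by
  set N := ((Matrix.projVandermonde (Fin.append x 1) (Fin.append 1 (-y))).submatrix
    finSumFinEquiv finSumFinEquiv).transpose
  have hN : N.det = (∏ i, ∏ j, (1 + x i * y j)) * vandProd x * vandProd y := by
    rw [Matrix.det_transpose, Matrix.det_submatrix_equiv_self, det_projVandermonde_append]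
    ring
  rw [← hN, Matrix.det_eq_sum_sign_smul_det_mul_det N _ bijective_sumCongr_trans_colPerm]
  refine sum_congr rfl fun lam _ => ?_
  have hx : (Matrix.of fun i i' => N (lam.colPerm (Sum.inl i)) (Sum.inl i')).det =
      altDet lam.parts x := by
    congr 1
    ext i i'
    simp [N, colPerm, colEquiv, Matrix.projVandermonde_apply, xCol, shift]
  have hy : (Matrix.of fun j j' => N (lam.colPerm (Sum.inr j)) (Sum.inr j')).det =
      altDet (conjPart b lam.parts) (fun j => -1 * y j) := by
    congr 1
    ext j j'
    simp [N, colPerm, colEquiv, Matrix.projVandermonde_apply, yCol, shift]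
  have hsq : ∀ s : ℕ, (-1 : R) ^ s * (-1) ^ s = 1 := fun s => by rw [← mul_pow]; simp
  rw [hx, hy, altDet_const_mul, sign_colPerm, Units.smul_def]
  push_cast
  linear_combination (altDet lam.parts x * altDet (conjPart b lam.parts) y) * hsq _

theorem dual_cauchy_general (a b : ℕ) :
    (∏ i : Fin a, ∏ j : Fin b,
        (1 + (X (Sum.inl i) : MvPolynomial (Fin a ⊕ Fin b) ℤ) * X (Sum.inr j))) *
      vandProd (fun i : Fin a => (X (Sum.inl i) : MvPolynomial (Fin a ⊕ Fin b) ℤ)) *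
      vandProd (fun j : Fin b => (X (Sum.inr j) : MvPolynomial (Fin a ⊕ Fin b) ℤ)) =
    ∑ lam : {lam : Fin a → Fin (b + 1) // ∀ i j : Fin a, i ≤ j → (lam j : ℕ) ≤ (lam i : ℕ)},
      altDet (fun i => (lam.1 i : ℕ))
          (fun i : Fin a => (X (Sum.inl i) : MvPolynomial (Fin a ⊕ Fin b) ℤ)) *
        altDet (conjPart b (fun i => (lam.1 i : ℕ)))
          (fun j : Fin b => (X (Sum.inr j) : MvPolynomial (Fin a ⊕ Fin b) ℤ)) :=
  dual_cauchy_bialternant _ _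

/-- The dual Cauchy identity
`∏_{i,j} (1 + x_i y_j) = Σ_λ s_λ(x) s_{λ'}(y)` (summed over partitions `λ` fitting in an
`a × b` box), stated after clearing the Vandermonde denominators of the bialternant formula:
`s_λ(x) = altDet λ x / vandProd x`. -/
theorem dual_cauchy (a b : ℕ) (ha : 0 < a) (hb : 0 < b) :
    (∏ i : Fin a, ∏ j : Fin b,
        (1 + (X (Sum.inl i) : MvPolynomial (Fin a ⊕ Fin b) ℤ) * X (Sum.inr j))) *
      vandProd (fun i : Fin a => (X (Sum.inl i) : MvPolynomial (Fin a ⊕ Fin b) ℤ)) *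
      vandProd (fun j : Fin b => (X (Sum.inr j) : MvPolynomial (Fin a ⊕ Fin b) ℤ)) =
    ∑ lam : {lam : Fin a → Fin (b + 1) // ∀ i j : Fin a, i ≤ j → (lam j : ℕ) ≤ (lam i : ℕ)},
      altDet (fun i => (lam.1 i : ℕ))
          (fun i : Fin a => (X (Sum.inl i) : MvPolynomial (Fin a ⊕ Fin b) ℤ)) *
        altDet (conjPart b (fun i => (lam.1 i : ℕ)))
          (fun j : Fin b => (X (Sum.inr j) : MvPolynomial (Fin a ⊕ Fin b) ℤ)) :=
  dual_cauchy_general a b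
end

section
/- In the symmetric group S_{n+1} viewed as the Coxeter group A_n with simple generators s_1,…,s_n, the minimum number of occurrences of the generator s_k in any reduced word for the longest element w_0 equals min(k, n+1−k). Equivalently, the vector of these minima is (1,2,…,⌈n/2⌉,…,2,1) for n odd and (1,2,…,n/2,n/2,…,2,1) for n even. -/
/-!
Call `x ≤ k` a crossing of `σ` when `σ x > k`. The identity has no crossings and `w₀` has
`min (k + 1) (n - k)` of them, while left multiplication by `s_a` leaves the crossings unchanged
for `a ≠ k` and creates at most one for `a = k`. Hence every word for `w₀`, reduced or not, uses
`s_k` at least `min (k + 1) (n - k)` times.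

Conversely, the reduced word `s₀ (s₁ s₀) ⋯ (s_{n-1} ⋯ s₀)` uses `s_k` exactly `n - k` times, and
its mirror image under `s_i ↦ s_{n-1-i}` (conjugation by `w₀`) uses it `k + 1` times.
-/

open Equiv Finset

namespace LongestElementWords

variable {n : ℕ}

def wordProd (ω : List (Fin n)) : Perm (Fin (n + 1)) :=
  (ω.map fun i : Fin n => swap i.castSucc i.succ).prod

lemma wordProd_cons (a : Fin n) (ω : List (Fin n)) :
    wordProd (a :: ω) = swap a.castSucc a.succ * wordProd ω :=
  List.prod_cons

def crossing (k : Fin n) (σ : Perm (Fin (n + 1))) : Finset (Fin (n + 1)) :=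
  univ.filter fun x => (x : ℕ) ≤ k ∧ (k : ℕ) < σ x

lemma mem_crossing {k : Fin n} {σ : Perm (Fin (n + 1))} {x : Fin (n + 1)} :
    x ∈ crossing k σ ↔ (x : ℕ) ≤ k ∧ (k : ℕ) < σ x := by
  simp [crossing]

lemma crossing_one (k : Fin n) : crossing k 1 = ∅ := by
  ext x
  rw [mem_crossing, Perm.one_apply]
  simp only [notMem_empty, iff_false]
  omega

lemma lt_swap_apply_iff {a k : Fin n} (hak : a ≠ k) (y : Fin (n + 1)) :
    (k : ℕ) < swap a.castSucc a.succ y ↔ (k : ℕ) < y := by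
  have hak' : (a : ℕ) ≠ k := Fin.val_ne_of_ne hak
  rw [swap_apply_def]
  split_ifs with h₁ h₂ <;> simp only [Fin.ext_iff, Fin.val_castSucc, Fin.val_succ] at * <;> omega

lemma crossing_swap_mul_of_ne {a k : Fin n} (hak : a ≠ k) (σ : Perm (Fin (n + 1))) :
    crossing k (swap a.castSucc a.succ * σ) = crossing k σ := by
  simp only [crossing, Perm.mul_apply, lt_swap_apply_iff hak]

lemma crossing_swap_mul_subset (k : Fin n) (σ : Perm (Fin (n + 1))) :
    crossing k (swap k.castSucc k.succ * σ) ⊆ insert (σ⁻¹ k.castSucc) (crossing k σ) := by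
  intro x hx
  rw [mem_crossing, Perm.mul_apply] at hx
  rw [mem_insert, mem_crossing, Perm.eq_inv_iff_eq]
  by_cases h : σ x = k.castSucc
  · exact Or.inl h
  · refine Or.inr ⟨hx.1, ?_⟩
    have hσx := hx.2
    rw [swap_apply_def] at hσx
    split_ifs at hσx <;> simp_all [Fin.ext_iff]

lemma card_crossing_swap_mul_le (a k : Fin n) (σ : Perm (Fin (n + 1))) :
    #(crossing k (swap a.castSucc a.succ * σ)) ≤ #(crossing k σ) + if a = k then 1 else 0 := by
  split_ifs with hak
  · subst hak
    exact (card_le_card (crossing_swap_mul_subset a σ)).trans (card_insert_le _ _)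
  · rw [crossing_swap_mul_of_ne hak, add_zero]

lemma card_crossing_wordProd_le_count (k : Fin n) (ω : List (Fin n)) :
    #(crossing k (wordProd ω)) ≤ ω.count k := by
  induction ω with
  | nil => simp [wordProd, crossing_one]
  | cons a ω ih =>
    rw [wordProd_cons, List.count_cons]
    simp only [beq_iff_eq]
    exact (card_crossing_swap_mul_le a k _).trans (by omega)

lemma card_crossing_revPerm (k : Fin n) :
    #(crossing k Fin.revPerm) = min ((k : ℕ) + 1) (n - k) := by
  have : crossing k Fin.revPerm = univ.filter fun x : Fin (n + 1) => x < min ((k : ℕ) + 1) (n - k) := by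
    ext x
    rw [mem_crossing, Fin.revPerm_apply, Fin.val_rev]
    simp only [mem_filter, mem_univ, true_and]
    omega
  rw [this, Fin.card_filter_val_lt]
  omega

theorem min_le_count_of_wordProd_eq_revPerm (k : Fin n) {ω : List (Fin n)}
    (hω : wordProd ω = Fin.revPerm) : min ((k : ℕ) + 1) (n - k) ≤ ω.count k :=
  card_crossing_revPerm k ▸ hω ▸ card_crossing_wordProd_le_count k ω

-- Generators indexed by `ℕ`, so that explicit words can be built and evaluated with `omega`.
def adjSwap (n i : ℕ) : Perm (Fin (n + 1)) :=
  if h : i < n then swap ⟨i, by omega⟩ ⟨i + 1, by omega⟩ else 1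

lemma adjSwap_val (i : Fin n) : adjSwap n i = swap i.castSucc i.succ := by
  rw [adjSwap, dif_pos i.isLt]
  rfl

lemma adjSwap_apply_val {i : ℕ} (hi : i < n) (x : Fin (n + 1)) :
    (adjSwap n i x : ℕ) = if (x : ℕ) = i then i + 1 else if (x : ℕ) = i + 1 then i else x := by
  rw [adjSwap, dif_pos hi, swap_apply_def]
  split_ifs <;> simp_all [Fin.ext_iff]

lemma wordProd_eq_prod_map_adjSwap (ω : List (Fin n)) :
    wordProd ω = ((ω.map Fin.val).map (adjSwap n)).prod := by
  simp only [wordProd, List.map_map, Function.comp_def, adjSwap_val]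

lemma prod_map_adjSwap_range_reverse_apply {m : ℕ} (hm : m ≤ n) (x : Fin (n + 1)) :
    (((List.range m).reverse.map (adjSwap n)).prod x : ℕ) =
      if (x : ℕ) = 0 then m else if (x : ℕ) ≤ m then x - 1 else x := by
  induction m with
  | zero =>
    simp only [List.range_zero, List.reverse_nil, List.map_nil, List.prod_nil, Perm.one_apply]
    split_ifs <;> omega
  | succ m ih =>
    rw [List.range_succ, List.reverse_append, List.reverse_singleton, List.singleton_append,
      List.map_cons, List.prod_cons, Perm.mul_apply, adjSwap_apply_val (by omega), ih (by omega)]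
    split_ifs <;> omega

def revWord : ℕ → List ℕ
  | 0 => []
  | m + 1 => revWord m ++ (List.range (m + 1)).reverse

lemma prod_map_adjSwap_revWord_apply {m : ℕ} (hm : m ≤ n) (x : Fin (n + 1)) :
    (((revWord m).map (adjSwap n)).prod x : ℕ) = if (x : ℕ) ≤ m then m - x else x := by
  induction m generalizing x with
  | zero => simp [revWord]
  | succ m ih =>
    rw [revWord, List.map_append, List.prod_append, Perm.mul_apply, ih (by omega),
      prod_map_adjSwap_range_reverse_apply hm]
    split_ifs <;> omega

lemma two_mul_length_revWord (m : ℕ) : 2 * (revWord m).length = m * (m + 1) := by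
  induction m with
  | zero => rfl
  | succ m ih =>
    rw [revWord, List.length_append, List.length_reverse, List.length_range]
    linarith

lemma count_revWord (m i : ℕ) : (revWord m).count i = m - i := by
  induction m with
  | zero => simp [revWord]
  | succ m ih =>
    rw [revWord, List.count_append, ih, List.count_reverse, List.count_range]
    split_ifs <;> omega

lemma lt_of_mem_revWord {m i : ℕ} (h : i ∈ revWord m) : i < m := by
  induction m with
  | zero => simp [revWord] at h
  | succ m ih =>
    rw [revWord, List.mem_append, List.mem_reverse, List.mem_range] at h
    rcases h with h | h
    · exact (ih h).trans m.lt_succ_self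
    · exact h

lemma exists_wordProd_eq_revPerm_count_eq (k : Fin n) :
    ∃ ω : List (Fin n), wordProd ω = Fin.revPerm ∧ ω.length = n * (n + 1) / 2 ∧
      ω.count k = n - k := by
  obtain ⟨ω, hω⟩ : ∃ ω : List (Fin n), ω.map Fin.val = revWord n := by
    lift revWord n to List (Fin n) using fun _ => lt_of_mem_revWord with ω
    exact ⟨ω, rfl⟩
  refine ⟨ω, ?_, ?_, ?_⟩
  · ext x
    rw [wordProd_eq_prod_map_adjSwap, hω, prod_map_adjSwap_revWord_apply le_rfl,
      Fin.revPerm_apply, Fin.val_rev]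
    split_ifs <;> omega
  · have := two_mul_length_revWord n
    rw [← hω, List.length_map] at this
    omega
  · rw [← List.count_map_of_injective ω Fin.val Fin.val_injective, hω, count_revWord]

lemma wordProd_map_rev (ω : List (Fin n)) :
    wordProd (ω.map Fin.rev) = Fin.revPerm * wordProd ω * Fin.revPerm⁻¹ := by
  rw [wordProd, wordProd, ← MulAut.conj_apply, map_list_prod, List.map_map, List.map_map]
  congr 1
  refine List.map_congr_left fun a _ => ?_
  simp only [Function.comp_apply, MulAut.conj_apply, ← swap_apply_apply, Fin.revPerm_apply,
    Fin.rev_castSucc, Fin.rev_succ, swap_comm]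

theorem exists_wordProd_eq_revPerm_count_eq_min (k : Fin n) :
    ∃ ω : List (Fin n), wordProd ω = Fin.revPerm ∧ ω.length = n * (n + 1) / 2 ∧
      ω.count k = min ((k : ℕ) + 1) (n - k) := by
  by_cases hk : n - k ≤ (k : ℕ) + 1
  · rw [min_eq_right hk]
    exact exists_wordProd_eq_revPerm_count_eq k
  · obtain ⟨ω, hprod, hlen, hcount⟩ := exists_wordProd_eq_revPerm_count_eq k.rev
    refine ⟨ω.map Fin.rev, ?_, by rw [List.length_map, hlen], ?_⟩
    · rw [wordProd_map_rev, hprod, mul_inv_cancel_right]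
    · rw [← Fin.rev_rev k, List.count_map_of_injective _ _ Fin.rev_injective, Fin.rev_rev,
        hcount, Fin.val_rev]
      omega

end LongestElementWords

open LongestElementWords in
theorem min_occurrences_in_reduced_words_of_w0_general (n : ℕ) (k : Fin n) :
    IsLeast {c : ℕ | ∃ ω : List (Fin n),
        (ω.map fun i : Fin n => Equiv.swap i.castSucc i.succ).prod =
          (Fin.revPerm : Equiv.Perm (Fin (n + 1))) ∧
        ω.length = n * (n + 1) / 2 ∧
        c = ω.count k}
      (min ((k : ℕ) + 1) (n - (k : ℕ))) := by
  refine ⟨?_, ?_⟩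
  · obtain ⟨ω, hprod, hlen, hcount⟩ := exists_wordProd_eq_revPerm_count_eq_min k
    exact ⟨ω, hprod, hlen, hcount.symm⟩
  · rintro c ⟨ω, hprod, -, rfl⟩
    exact min_le_count_of_wordProd_eq_revPerm k hprod

/-- In the symmetric group `S_{n+1}`, viewed as the Coxeter group `A_n` with simple generators
`s_i = (i, i+1)`, the minimum number of occurrences of `s_k` (zero-based `k : Fin n`, i.e. the
`(k+1)`-st generator) in a reduced word for the longest element `w₀` (the reverse permutation,
of length `n(n+1)/2`) equals `min (k+1) (n-k)`. -/
theorem min_occurrences_in_reduced_words_of_w0 (n : ℕ) (hn : 0 < n) (k : Fin n) :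
    IsLeast {c : ℕ | ∃ ω : List (Fin n),
        (ω.map fun i : Fin n => Equiv.swap i.castSucc i.succ).prod =
          (Fin.revPerm : Equiv.Perm (Fin (n + 1))) ∧
        ω.length = n * (n + 1) / 2 ∧
        c = ω.count k}
      (min ((k : ℕ) + 1) (n - (k : ℕ))) :=
  min_occurrences_in_reduced_words_of_w0_general n k
end
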